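/- arXiv:1711.09475 — 2 statements merged into one kernel-verified Lean document; each statement's English description precedes it below -/
import Mathlib

section
/- For the ball B(r) ⊆ ℂⁿ of radius r, the Kobayashi–Royden metric satisfies 𝔎_{B(r)}(a, ξ) = [ |ξ|²/(r² − |a|²) + |⟨ξ, a⟩|²/(r² − |a|²)² ]^{1/2} for every a ∈ B(r) and ξ ∈ ℂⁿ, where ⟨ξ, a⟩ = ∑ ξ^j conj(a^j). -/
open Metric Set Complex

/-- The Kobayashi–Royden infinitesimal pseudometric of `M ⊆ E`, via holomorphic discs. -/
noncomputable def kobayashi {E : Type*} [NormedAddCommGroup E] [NormedSpace ℂ E]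
    (M : Set E) (x ξ : E) : ℝ :=
  sInf {t : ℝ | ∃ R : ℝ, 0 < R ∧ t = 1 / R ∧ ∃ φ : ℂ → E,
    DifferentiableOn ℂ φ (Metric.ball 0 R) ∧ Set.MapsTo φ (Metric.ball 0 R) M ∧
    φ 0 = x ∧ HasDerivAt φ ξ 0}

section KobayashiAux

variable {F : Type*} [NormedAddCommGroup F] [InnerProductSpace ℂ F]

/-- The Möbius automorphism of the ball `B(r)` sending `a` to `0`. -/
noncomputable def mob (r : ℝ) (a : F) (z : F) : F :=
  ((1 : ℂ) - (inner ℂ a z : ℂ) / (r : ℂ) ^ 2)⁻¹ •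
    (a - ((Real.sqrt (1 - ‖a‖ ^ 2 / r ^ 2) : ℝ) : ℂ) • z +
      ((inner ℂ a z : ℂ) * (((Real.sqrt (1 - ‖a‖ ^ 2 / r ^ 2) : ℝ) : ℂ) - 1) / ((‖a‖ : ℂ) ^ 2)) • a)

variable {r : ℝ} {a : F}

lemma sigma_sq (hr : 0 < r) (ha : ‖a‖ < r) :
    (Real.sqrt (1 - ‖a‖ ^ 2 / r ^ 2)) ^ 2 = 1 - ‖a‖ ^ 2 / r ^ 2 := by
  apply Real.sq_sqrt
  have h1 : ‖a‖ ^ 2 < r ^ 2 := by nlinarith [norm_nonneg a]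
  have : ‖a‖ ^ 2 / r ^ 2 < 1 := (div_lt_one (by positivity)).2 h1
  linarith

lemma sigma_pos (hr : 0 < r) (ha : ‖a‖ < r) : 0 < Real.sqrt (1 - ‖a‖ ^ 2 / r ^ 2) := by
  apply Real.sqrt_pos.2
  have h1 : ‖a‖ ^ 2 < r ^ 2 := by nlinarith [norm_nonneg a]
  have : ‖a‖ ^ 2 / r ^ 2 < 1 := (div_lt_one (by positivity)).2 h1
  linarith

lemma den_ne_zero (hr : 0 < r) (ha : ‖a‖ < r) {z : F} (hz : ‖z‖ < r) :
    (1 : ℂ) - (inner ℂ a z : ℂ) / (r : ℂ) ^ 2 ≠ 0 := by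
  have h1 : ‖(inner ℂ a z : ℂ) / (r : ℂ) ^ 2‖ < 1 := by
    rw [norm_div]
    have h2 : ‖(inner ℂ a z : ℂ)‖ ≤ ‖a‖ * ‖z‖ := norm_inner_le_norm a z
    have h3 : ‖a‖ * ‖z‖ < r * r := by
      rcases eq_or_lt_of_le (norm_nonneg a) with h | h
      · simpa [← h] using by positivity
      · exact mul_lt_mul'' ha hz (le_of_lt h) (norm_nonneg z)
    have h4 : ‖((r : ℂ) ^ 2)‖ = r ^ 2 := by
      rw [norm_pow, Complex.norm_real, Real.norm_of_nonneg hr.le]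
    rw [h4, div_lt_one (by positivity)]
    nlinarith
  intro h
  have : (inner ℂ a z : ℂ) / (r : ℂ) ^ 2 = 1 := by linear_combination -h
  rw [this] at h1
  simp at h1

/-- Key norm identity for the numerator of the Möbius map. -/
lemma mob_num_norm (hr : 0 < r) (ha : ‖a‖ < r) (ha0 : a ≠ 0) (z : F) :
    ‖a - ((Real.sqrt (1 - ‖a‖ ^ 2 / r ^ 2) : ℝ) : ℂ) • z +
      ((inner ℂ a z : ℂ) * (((Real.sqrt (1 - ‖a‖ ^ 2 / r ^ 2) : ℝ) : ℂ) - 1) / ((‖a‖ : ℂ) ^ 2)) • a‖ ^ 2 =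
    ‖(1 : ℂ) - (inner ℂ a z : ℂ) / (r : ℂ) ^ 2‖ ^ 2 * r ^ 2 -
      (Real.sqrt (1 - ‖a‖ ^ 2 / r ^ 2)) ^ 2 * (r ^ 2 - ‖z‖ ^ 2) := by
  have hσ := sigma_sq hr ha
  set σ : ℝ := Real.sqrt (1 - ‖a‖ ^ 2 / r ^ 2) with hσdef
  have hA : (0:ℝ) < ‖a‖ := norm_pos_iff.2 ha0
  have hAc : ((‖a‖ : ℂ)) ^ 2 ≠ 0 := by
    simp only [ne_eq, pow_eq_zero_iff, Complex.ofReal_eq_zero]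
    simp [hA.ne']
  set α : ℂ := (inner ℂ a z : ℂ) with hαdef
  set m : ℂ := α / (‖a‖ : ℂ) ^ 2 with hmdef
  set w : F := z - m • a with hwdef
  have hiaa : (inner ℂ a a : ℂ) = (‖a‖ : ℂ) ^ 2 := inner_self_eq_norm_sq_to_K a
  have hw : (inner ℂ a w : ℂ) = 0 := by
    simp only [hwdef, inner_sub_right, inner_smul_right, hiaa, hmdef]
    field_simp
    rw [mul_div_assoc, div_self (by simpa using hA.ne'), mul_one]
    exact sub_eq_zero.2 hαdef.symm
  have hvec : a - (σ : ℂ) • z + (α * ((σ:ℂ) - 1) / ((‖a‖ : ℂ) ^ 2)) • a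
      = ((1 - m) • a - (σ:ℂ) • w) := by
    simp only [hwdef, hmdef]
    match_scalars <;> field_simp <;> ring
  rw [hvec]
  have horth : (inner ℂ ((1 - m) • a) ((σ:ℂ) • w) : ℂ) = 0 := by
    rw [inner_smul_right, inner_smul_left, hw]
    ring
  have h1 : ‖(1 - m) • a - (σ:ℂ) • w‖ ^ 2 = ‖(1-m)•a‖^2 + ‖(σ:ℂ)•w‖^2 := by
    rw [@norm_sub_sq ℂ, horth]
    simp
  have hz2 : ‖z‖ ^ 2 = ‖m • a‖^2 + ‖w‖^2 := by
    have : z = m • a + w := by simp [hwdef]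
    rw [this, @norm_add_sq ℂ, inner_smul_left, hw]
    simp
  rw [h1]
  have hns : ∀ c : ℂ, ‖c‖ ^ 2 = Complex.normSq c := fun c => by
    rw [Complex.sq_norm]
  have hcast : ((‖a‖ : ℂ)) ^ 2 = ((‖a‖^2 : ℝ) : ℂ) := by push_cast; ring
  have hcastr : ((r : ℂ)) ^ 2 = ((r^2 : ℝ) : ℂ) := by push_cast; ring
  have e0 : ‖m‖^2 = Complex.normSq α / (‖a‖^2)^2 := by
    rw [hns, hmdef, hcast, map_div₀, Complex.normSq_ofReal]
    ring
  have e1 : ‖(1-m)•a‖^2 = (1 - 2*(α.re/‖a‖^2) + Complex.normSq α/(‖a‖^2)^2) * ‖a‖^2 := by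
    rw [norm_smul, mul_pow, hns, Complex.normSq_sub]
    rw [hmdef, hcast, map_div₀, Complex.normSq_ofReal]
    simp [Complex.div_ofReal_re, Complex.mul_re, ← Complex.ofReal_pow, ← Complex.ofReal_inv,
      Complex.conj_re, Complex.conj_im]
    exact Or.inl (by ring)
  have e2 : ‖m•a‖^2 = Complex.normSq α/(‖a‖^2)^2 * ‖a‖^2 := by
    rw [norm_smul, mul_pow, e0]
  have e3 : ‖(1:ℂ) - α/(r:ℂ)^2‖^2 = 1 - 2*(α.re/r^2) + Complex.normSq α/(r^2)^2 := by
    rw [hns, Complex.normSq_sub, hcastr, map_div₀, Complex.normSq_ofReal]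
    simp [Complex.div_ofReal_re, Complex.mul_re, ← Complex.ofReal_pow, ← Complex.ofReal_inv,
      Complex.conj_re, Complex.conj_im]
    ring
  have e4 : ‖(σ:ℂ)•w‖^2 = σ^2 * ‖w‖^2 := by
    rw [norm_smul, mul_pow, hns, Complex.normSq_ofReal]
    ring
  have e5 : ‖w‖^2 = ‖z‖^2 - Complex.normSq α/(‖a‖^2)^2 * ‖a‖^2 := by
    rw [hz2, e2]; ring
  rw [e1, e3, e4, e5, hσ]
  have hr2 : (r:ℝ)^2 ≠ 0 := by positivity
  have hA2 : (‖a‖:ℝ)^2 ≠ 0 := by positivity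
  field_simp
  ring

/-- The Möbius map sends the ball into itself. -/
lemma mob_mapsTo (hr : 0 < r) (ha : ‖a‖ < r) (ha0 : a ≠ 0) :
    MapsTo (mob r a) (ball (0 : F) r) (ball (0 : F) r) := by
  intro z hz
  rw [mem_ball_zero_iff] at hz ⊢
  have hden := den_ne_zero hr ha hz
  have hnum := mob_num_norm hr ha ha0 z
  have hσ := sigma_pos hr ha
  rw [mob, norm_smul]
  have hd : 0 < ‖(1 : ℂ) - (inner ℂ a z : ℂ) / (r : ℂ) ^ 2‖ := norm_pos_iff.2 hden
  rw [norm_inv]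
  rw [inv_mul_lt_iff₀ hd]
  have h2 : ‖a - ((Real.sqrt (1 - ‖a‖ ^ 2 / r ^ 2) : ℝ) : ℂ) • z +
      ((inner ℂ a z : ℂ) * (((Real.sqrt (1 - ‖a‖ ^ 2 / r ^ 2) : ℝ) : ℂ) - 1) / ((‖a‖ : ℂ) ^ 2)) • a‖ ^ 2
      < (‖(1 : ℂ) - (inner ℂ a z : ℂ) / (r : ℂ) ^ 2‖ * r) ^ 2 := by
    rw [hnum, mul_pow]
    have hz2 : 0 < r ^ 2 - ‖z‖ ^ 2 := by nlinarith [norm_nonneg z]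
    nlinarith [sq_nonneg (Real.sqrt (1 - ‖a‖ ^ 2 / r ^ 2)), mul_pos (pow_pos hσ 2) hz2]
  exact lt_of_pow_lt_pow_left₀ 2 (by positivity) h2

lemma mob_zero : mob r a 0 = a := by simp [mob]

/-- Derivative of `mob ∘ φ`. -/
lemma mob_hasDerivAt {φ : ℂ → F} {v : F} {t : ℂ}
    (hφ : HasDerivAt φ v t) (hden : (1 : ℂ) - (inner ℂ a (φ t) : ℂ) / (r : ℂ) ^ 2 ≠ 0) :
    HasDerivAt (fun w => mob r a (φ w))
      (((inner ℂ a v : ℂ) / (r : ℂ) ^ 2 * (((1 : ℂ) - (inner ℂ a (φ t) : ℂ) / (r : ℂ) ^ 2) ^ 2)⁻¹) •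
          (a - ((Real.sqrt (1 - ‖a‖ ^ 2 / r ^ 2) : ℝ) : ℂ) • (φ t) +
            ((inner ℂ a (φ t) : ℂ) * (((Real.sqrt (1 - ‖a‖ ^ 2 / r ^ 2) : ℝ) : ℂ) - 1) /
              ((‖a‖ : ℂ) ^ 2)) • a) +
        ((1 : ℂ) - (inner ℂ a (φ t) : ℂ) / (r : ℂ) ^ 2)⁻¹ •
          (-(((Real.sqrt (1 - ‖a‖ ^ 2 / r ^ 2) : ℝ) : ℂ) • v) +
            ((inner ℂ a v : ℂ) * (((Real.sqrt (1 - ‖a‖ ^ 2 / r ^ 2) : ℝ) : ℂ) - 1) /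
              ((‖a‖ : ℂ) ^ 2)) • a)) t := by
  set σ : ℝ := Real.sqrt (1 - ‖a‖ ^ 2 / r ^ 2) with hσdef
  have hα : HasDerivAt (fun w => (inner ℂ a (φ w) : ℂ)) (inner ℂ a v : ℂ) t := by
    have h1 := (innerSL ℂ a).hasFDerivAt.comp_hasDerivAt t hφ
    exact h1
  have hdenD : HasDerivAt (fun w => (1 : ℂ) - (inner ℂ a (φ w) : ℂ) / (r : ℂ) ^ 2)
      (-((inner ℂ a v : ℂ) / (r : ℂ) ^ 2)) t := (hα.div_const _).const_sub 1
  have hinv := hdenD.inv hden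
  have hnum : HasDerivAt (fun w => a - (σ : ℂ) • (φ w) +
      ((inner ℂ a (φ w) : ℂ) * ((σ:ℂ) - 1) / ((‖a‖ : ℂ) ^ 2)) • a)
      (-((σ:ℂ) • v) + ((inner ℂ a v : ℂ) * ((σ:ℂ) - 1) / ((‖a‖ : ℂ) ^ 2)) • a) t := by
    have h2 : HasDerivAt (fun w => a - (σ : ℂ) • (φ w)) (-((σ:ℂ) • v)) t :=
      (hφ.const_smul (σ:ℂ)).const_sub a
    have h3 : HasDerivAt (fun w => ((inner ℂ a (φ w) : ℂ) * ((σ:ℂ) - 1) / ((‖a‖ : ℂ) ^ 2)) • a)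
        (((inner ℂ a v : ℂ) * ((σ:ℂ) - 1) / ((‖a‖ : ℂ) ^ 2)) • a) t :=
      ((hα.mul_const _).div_const _).smul_const a
    exact h2.add h3
  have H := hinv.smul hnum
  refine H.congr_deriv ?_
  simp only [Pi.inv_apply]
  match_scalars <;> ring

lemma mob_num_self (hr : 0 < r) (ha : ‖a‖ < r) (ha0 : a ≠ 0) :
    a - ((Real.sqrt (1 - ‖a‖ ^ 2 / r ^ 2) : ℝ) : ℂ) • a +
      ((inner ℂ a a : ℂ) * (((Real.sqrt (1 - ‖a‖ ^ 2 / r ^ 2) : ℝ) : ℂ) - 1) / ((‖a‖ : ℂ) ^ 2)) • a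
      = 0 := by
  have hiaa : (inner ℂ a a : ℂ) = (‖a‖ : ℂ) ^ 2 := inner_self_eq_norm_sq_to_K a
  have hA : (0:ℝ) < ‖a‖ := norm_pos_iff.2 ha0
  have hAc : ((‖a‖ : ℂ)) ≠ 0 := by simp [hA.ne']
  rw [hiaa]
  match_scalars
  field_simp
  ring

/-- `D₀ η = ξ`: the derivative identity at `0`. -/
lemma mob_D0 (hr : 0 < r) (ha : ‖a‖ < r) (ha0 : a ≠ 0) (ξ u η : F)
    (hu : u = -(((Real.sqrt (1 - ‖a‖ ^ 2 / r ^ 2) : ℝ) : ℂ) • ξ) +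
      ((inner ℂ a ξ : ℂ) * (((Real.sqrt (1 - ‖a‖ ^ 2 / r ^ 2) : ℝ) : ℂ) - 1) / ((‖a‖ : ℂ) ^ 2)) • a)
    (hη : η = ((1:ℂ) - (‖a‖:ℂ)^2/(r:ℂ)^2)⁻¹ • u) :
    ((inner ℂ a η : ℂ) / (r:ℂ)^2) • a +
      (-(((Real.sqrt (1 - ‖a‖ ^ 2 / r ^ 2) : ℝ) : ℂ) • η) +
        ((inner ℂ a η : ℂ) * (((Real.sqrt (1 - ‖a‖ ^ 2 / r ^ 2) : ℝ) : ℂ) - 1) / ((‖a‖ : ℂ) ^ 2)) • a)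
      = ξ := by
  have hσ2 := sigma_sq hr ha
  set σ : ℝ := Real.sqrt (1 - ‖a‖ ^ 2 / r ^ 2) with hσdef
  have hσpos : 0 < σ := by
    apply Real.sqrt_pos.2
    have h1 : ‖a‖ ^ 2 < r ^ 2 := by nlinarith [norm_nonneg a]
    have : ‖a‖ ^ 2 / r ^ 2 < 1 := (div_lt_one (by positivity)).2 h1
    linarith
  have hA : (0:ℝ) < ‖a‖ := norm_pos_iff.2 ha0
  have hAc : ((‖a‖ : ℂ)) ≠ 0 := by simp [hA.ne']
  have hrc : ((r : ℂ)) ≠ 0 := by simp [hr.ne']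
  have hσc : ((σ : ℂ)) ^ 2 = 1 - (‖a‖:ℂ)^2/(r:ℂ)^2 := by
    have := congrArg (fun x : ℝ => (x : ℂ)) hσ2
    push_cast at this
    exact this
  have hσc0 : ((σ : ℂ)) ≠ 0 := by simp [hσpos.ne']
  have hd0 : ((1:ℂ) - (‖a‖:ℂ)^2/(r:ℂ)^2) ≠ 0 := by
    rw [← hσc]
    exact pow_ne_zero 2 hσc0
  have hiaa : (inner ℂ a a : ℂ) = (‖a‖ : ℂ) ^ 2 := inner_self_eq_norm_sq_to_K a
  have hiau : (inner ℂ a η : ℂ) = ((1:ℂ) - (‖a‖:ℂ)^2/(r:ℂ)^2)⁻¹ * (-(inner ℂ a ξ : ℂ)) := by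
    rw [hη, hu, inner_smul_right, inner_add_right, inner_neg_right, inner_smul_right,
      inner_smul_right, hiaa]
    field_simp
    ring
  have hlt : ‖a‖^2 < r^2 := by nlinarith [norm_nonneg a]
  have h1 : (r:ℂ)^2 - (‖a‖:ℂ)^2 ≠ 0 := by
    have h' : ((r^2 - ‖a‖^2 : ℝ) : ℂ) ≠ 0 := Complex.ofReal_ne_zero.2 (sub_pos.2 hlt).ne'
    push_cast at h'
    exact h'
  have hσ4 : ((σ:ℂ))^4 = (1 - (‖a‖:ℂ)^2/(r:ℂ)^2)^2 := by rw [← hσc]; ring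
  rw [hiau, hη, hu]
  match_scalars <;>
    (try field_simp) <;> (try ring_nf) <;> (try simp only [hσ4, hσc]) <;> (try field_simp) <;>
      (try ring)

lemma mob_u_norm (hr : 0 < r) (ha : ‖a‖ < r) (ha0 : a ≠ 0) (ξ u : F)
    (hu : u = -(((Real.sqrt (1 - ‖a‖ ^ 2 / r ^ 2) : ℝ) : ℂ) • ξ) +
      ((inner ℂ a ξ : ℂ) * (((Real.sqrt (1 - ‖a‖ ^ 2 / r ^ 2) : ℝ) : ℂ) - 1) / ((‖a‖ : ℂ) ^ 2)) • a) :
    ‖u‖ ^ 2 = (Real.sqrt (1 - ‖a‖ ^ 2 / r ^ 2)) ^ 2 * ‖ξ‖ ^ 2 +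
      ‖(inner ℂ a ξ : ℂ)‖ ^ 2 / r ^ 2 := by
  have hσ2 := sigma_sq hr ha
  set σ : ℝ := Real.sqrt (1 - ‖a‖ ^ 2 / r ^ 2) with hσdef
  have hA : (0:ℝ) < ‖a‖ := norm_pos_iff.2 ha0
  have hAc : ((‖a‖ : ℂ)) ≠ 0 := by simp [hA.ne']
  set α : ℂ := (inner ℂ a ξ : ℂ) with hαdef
  set c : ℂ := α * ((σ:ℂ) - 1) / ((‖a‖ : ℂ) ^ 2) with hcdef
  have hns : ∀ w : ℂ, ‖w‖ ^ 2 = Complex.normSq w := fun w => by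
    rw [Complex.sq_norm]
  have hαα : α * (starRingEnd ℂ) α = ((‖α‖^2 : ℝ) : ℂ) := by
    rw [Complex.mul_conj]
    exact congrArg _ (hns α).symm
  have hc2 : ((‖a‖ : ℂ)) ^ 2 = ((‖a‖^2 : ℝ) : ℂ) := by push_cast; ring
  have hinner : (inner ℂ (-((σ:ℂ) • ξ)) (c • a) : ℂ)
      = ((-σ * (σ - 1) * ‖α‖^2 / ‖a‖^2 : ℝ) : ℂ) := by
    rw [inner_neg_left, inner_smul_left, inner_smul_right, ← inner_conj_symm ξ a, ← hαdef]
    calc -((starRingEnd ℂ) ((σ:ℂ)) * (c * (starRingEnd ℂ) α))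
        = -((σ:ℂ) * ((σ:ℂ) - 1) * (α * (starRingEnd ℂ) α) / ((‖a‖:ℂ)^2)) := by
          rw [Complex.conj_ofReal, hcdef]; ring
      _ = -((σ:ℂ) * ((σ:ℂ) - 1) * ((‖α‖^2:ℝ):ℂ) / (((‖a‖^2:ℝ)):ℂ)) := by rw [hαα, hc2]
      _ = _ := by push_cast; ring
  have hsum : ‖u‖^2 = ‖-((σ:ℂ) • ξ)‖^2 + 2 * (-σ * (σ - 1) * ‖α‖^2 / ‖a‖^2) + ‖c • a‖^2 := by
    rw [hu, @norm_add_sq ℂ, hinner]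
    norm_cast
  have h1 : ‖-((σ:ℂ) • ξ)‖^2 = σ^2 * ‖ξ‖^2 := by
    rw [norm_neg, norm_smul, mul_pow, hns, Complex.normSq_ofReal]
    ring
  have h2 : ‖c • a‖^2 = ‖α‖^2 * (σ - 1)^2 / ‖a‖^2 := by
    rw [norm_smul, mul_pow, hns, hcdef]
    have : Complex.normSq (α * ((σ:ℂ) - 1) / ((‖a‖:ℂ))^2)
        = Complex.normSq α * (σ-1)^2 / (‖a‖^2)^2 := by
      rw [map_div₀, map_mul]
      have e1 : ((σ:ℂ) - 1) = (((σ - 1 : ℝ)) : ℂ) := by push_cast; ring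
      have e2 : ((‖a‖ : ℂ)) ^ 2 = ((‖a‖^2 : ℝ) : ℂ) := by push_cast; ring
      rw [e1, e2, Complex.normSq_ofReal, Complex.normSq_ofReal]
      ring
    rw [this, ← hns]
    field_simp
  rw [hsum, h1, h2]
  have hr2 : (r:ℝ)^2 ≠ 0 := by positivity
  have hA2 : (‖a‖:ℝ)^2 ≠ 0 := by positivity
  field_simp
  have hσr : σ^2 * r^2 = r^2 - ‖a‖^2 := by
    rw [hσ2]; field_simp
  linear_combination (-(‖α‖^2)) * hσr

-- new lemmas
lemma mob_self (hr : 0 < r) (ha : ‖a‖ < r) (ha0 : a ≠ 0) : mob r a a = 0 := by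
  rw [mob, mob_num_self hr ha ha0, smul_zero]

lemma mob_hasDerivAt_zero (hr : 0 < r) (ha : ‖a‖ < r) (ha0 : a ≠ 0)
    {g : ℂ → F} {v : F} (hg : HasDerivAt g v 0) (hg0 : g 0 = 0) :
    HasDerivAt (fun w => mob r a (g w))
      (((inner ℂ a v : ℂ) / (r:ℂ)^2) • a +
        (-(((Real.sqrt (1 - ‖a‖ ^ 2 / r ^ 2) : ℝ) : ℂ) • v) +
          ((inner ℂ a v : ℂ) * (((Real.sqrt (1 - ‖a‖ ^ 2 / r ^ 2) : ℝ) : ℂ) - 1) /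
            ((‖a‖ : ℂ) ^ 2)) • a)) 0 := by
  have hden : (1 : ℂ) - (inner ℂ a (g 0) : ℂ) / (r : ℂ) ^ 2 ≠ 0 := by
    rw [hg0]; simp
  have H := mob_hasDerivAt hg hden
  rw [hg0] at H
  simp only [inner_zero_right, zero_div, sub_zero, smul_zero, mul_zero, zero_mul,
    inv_one, one_smul, one_pow, zero_smul, add_zero, zero_add, mul_one] at H
  convert H using 2 <;> simp

lemma mob_hasDerivAt_center (hr : 0 < r) (ha : ‖a‖ < r) (ha0 : a ≠ 0)
    {φ : ℂ → F} {ξ : F} (hφ : HasDerivAt φ ξ 0) (h0 : φ 0 = a) :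
    HasDerivAt (fun w => mob r a (φ w))
      (((1:ℂ) - (‖a‖:ℂ)^2/(r:ℂ)^2)⁻¹ •
        (-(((Real.sqrt (1 - ‖a‖ ^ 2 / r ^ 2) : ℝ) : ℂ) • ξ) +
          ((inner ℂ a ξ : ℂ) * (((Real.sqrt (1 - ‖a‖ ^ 2 / r ^ 2) : ℝ) : ℂ) - 1) /
            ((‖a‖ : ℂ) ^ 2)) • a)) 0 := by
  have hiaa : (inner ℂ a a : ℂ) = (‖a‖ : ℂ) ^ 2 := inner_self_eq_norm_sq_to_K a
  have hden : (1 : ℂ) - (inner ℂ a (φ 0) : ℂ) / (r : ℂ) ^ 2 ≠ 0 := by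
    rw [h0]; exact den_ne_zero hr ha ha
  have H := mob_hasDerivAt hφ hden
  rw [h0] at H
  rw [mob_num_self hr ha ha0, smul_zero, zero_add, hiaa] at H
  exact H

end KobayashiAux


section KobayashiBounds

variable {E : Type*} [NormedAddCommGroup E] [NormedSpace ℂ E] {M : Set E} {x ξ : E}

lemma kobayashi_le {R : ℝ} {φ : ℂ → E} (hR : 0 < R)
    (h1 : DifferentiableOn ℂ φ (ball 0 R)) (h2 : MapsTo φ (ball 0 R) M)
    (h3 : φ 0 = x) (h4 : HasDerivAt φ ξ 0) : kobayashi M x ξ ≤ 1 / R := by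
  apply csInf_le
  · refine ⟨0, fun t ht => ?_⟩
    obtain ⟨R', hR', rfl, -⟩ := ht
    positivity
  · exact ⟨R, hR, rfl, φ, h1, h2, h3, h4⟩

lemma le_kobayashi (c : ℝ)
    (hne : {t : ℝ | ∃ R : ℝ, 0 < R ∧ t = 1 / R ∧ ∃ φ : ℂ → E,
      DifferentiableOn ℂ φ (Metric.ball 0 R) ∧ Set.MapsTo φ (Metric.ball 0 R) M ∧
      φ 0 = x ∧ HasDerivAt φ ξ 0}.Nonempty)
    (hc : ∀ (R : ℝ) (φ : ℂ → E), 0 < R → DifferentiableOn ℂ φ (ball 0 R) →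
      MapsTo φ (ball 0 R) M → φ 0 = x → HasDerivAt φ ξ 0 → c ≤ 1 / R) :
    c ≤ kobayashi M x ξ := by
  apply le_csInf hne
  rintro t ⟨R, hR, rfl, φ, h1, h2, h3, h4⟩
  exact hc R φ hR h1 h2 h3 h4

lemma kobayashi_zero_vector (hx : x ∈ M) : kobayashi M x 0 = 0 := by
  have hmem : ∀ R : ℝ, 0 < R → kobayashi M x 0 ≤ 1 / R := fun R hR =>
    kobayashi_le hR (differentiableOn_const x) (fun z _ => hx) rfl (hasDerivAt_const 0 x)
  have hge : (0:ℝ) ≤ kobayashi M x 0 := by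
    apply le_kobayashi
    · exact ⟨1, 1, one_pos, by norm_num, fun _ => x, differentiableOn_const _,
        fun z _ => hx, rfl, hasDerivAt_const 0 x⟩
    · intro R φ hR _ _ _ _
      positivity
  refine le_antisymm ?_ hge
  by_contra h0
  push_neg at h0
  have h2 := hmem (2 / kobayashi M x 0) (by positivity)
  rw [one_div_div] at h2
  linarith

end KobayashiBounds

/-- The Kobayashi–Royden metric of the Euclidean ball `B(r) ⊆ ℂⁿ`:
`𝔎_{B(r)}(a, ξ) = √( |ξ|²/(r²−|a|²) + |⟨ξ,a⟩|²/(r²−|a|²)² )`, where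
`⟨ξ, a⟩ = ∑ ξ^j conj(a^j)` is the Hermitian inner product (in Mathlib's convention,
conjugate-linear in the first slot, this is `⟪a, ξ⟫_ℂ`). -/
theorem kobayashi_ball_formula {n : ℕ} (r : ℝ) (hr : 0 < r)
    (a ξ : EuclideanSpace ℂ (Fin n)) (ha : a ∈ Metric.ball (0 : EuclideanSpace ℂ (Fin n)) r) :
    kobayashi (Metric.ball (0 : EuclideanSpace ℂ (Fin n)) r) a ξ =
      Real.sqrt (‖ξ‖ ^ 2 / (r ^ 2 - ‖a‖ ^ 2) +
        ‖(inner ℂ a ξ : ℂ)‖ ^ 2 / (r ^ 2 - ‖a‖ ^ 2) ^ 2) := by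
  have haR : ‖a‖ < r := by rwa [mem_ball_zero_iff] at ha
  have hlt : ‖a‖ ^ 2 < r ^ 2 := by nlinarith [norm_nonneg a]
  by_cases hξ : ξ = 0
  · subst hξ
    rw [kobayashi_zero_vector ha]
    simp
  by_cases ha0 : a = 0
  · subst ha0
    have hξn : 0 < ‖ξ‖ := norm_pos_iff.2 hξ
    have harg : ‖ξ‖ ^ 2 / (r ^ 2 - ‖(0 : EuclideanSpace ℂ (Fin n))‖ ^ 2) +
        ‖(inner ℂ (0 : EuclideanSpace ℂ (Fin n)) ξ : ℂ)‖ ^ 2 /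
          (r ^ 2 - ‖(0 : EuclideanSpace ℂ (Fin n))‖ ^ 2) ^ 2 = (‖ξ‖ / r) ^ 2 := by
      simp only [norm_zero, inner_zero_left, ne_eq]
      norm_num [div_pow]
    rw [harg, Real.sqrt_sq (by positivity)]
    have hR : (0:ℝ) < r / ‖ξ‖ := by positivity
    have hg : HasDerivAt (fun w : ℂ => w • ξ) ξ 0 := by
      simpa using (hasDerivAt_id (0:ℂ)).smul_const ξ
    have hgmaps : MapsTo (fun w : ℂ => w • ξ)
        (ball 0 (r / ‖ξ‖)) (ball (0 : EuclideanSpace ℂ (Fin n)) r) := by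
      intro w hw
      rw [mem_ball_zero_iff] at hw ⊢
      rw [norm_smul]
      calc ‖w‖ * ‖ξ‖ < r / ‖ξ‖ * ‖ξ‖ := mul_lt_mul_of_pos_right hw hξn
        _ = r := div_mul_cancel₀ r hξn.ne'
    have hgdiff : DifferentiableOn ℂ (fun w : ℂ => w • ξ) (ball 0 (r / ‖ξ‖)) := by
      intro w hw
      have : HasDerivAt (fun w : ℂ => w • ξ) ξ w := by
        simpa using (hasDerivAt_id w).smul_const ξ
      exact this.differentiableAt.differentiableWithinAt
    apply le_antisymm
    · have := kobayashi_le hR hgdiff hgmaps (zero_smul ℂ ξ) hg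
      rwa [one_div_div] at this
    · apply le_kobayashi
      · exact ⟨1 / (r / ‖ξ‖), r / ‖ξ‖, hR, rfl, fun w : ℂ => w • ξ, hgdiff, hgmaps, zero_smul ℂ ξ, hg⟩
      · intro R φ hR' h1 h2 h3 h4
        have hmaps' : MapsTo φ (ball 0 R) (ball (φ 0) r) := by rw [h3]; exact h2
        have hSch := Complex.norm_deriv_le_div_of_mapsTo_ball h1 (hmaps'.mono_right ball_subset_closedBall) hR'
        rw [h4.deriv] at hSch
        rw [div_le_div_iff₀ hr hR']
        have := (le_div_iff₀ hR').1 hSch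
        linarith
  · -- main case : a ≠ 0 and ξ ≠ 0
    set u : EuclideanSpace ℂ (Fin n) :=
      -(((Real.sqrt (1 - ‖a‖ ^ 2 / r ^ 2) : ℝ) : ℂ) • ξ) +
        ((inner ℂ a ξ : ℂ) * (((Real.sqrt (1 - ‖a‖ ^ 2 / r ^ 2) : ℝ) : ℂ) - 1) /
          ((‖a‖ : ℂ) ^ 2)) • a with hu
    set η : EuclideanSpace ℂ (Fin n) := ((1:ℂ) - (‖a‖:ℂ)^2/(r:ℂ)^2)⁻¹ • u with hη
    have hD0 := mob_D0 hr haR ha0 ξ u η hu hη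
    have hη0 : η ≠ 0 := by
      intro h
      apply hξ
      rw [← hD0, h]
      simp
    have hηn : 0 < ‖η‖ := norm_pos_iff.2 hη0
    have hunorm := mob_u_norm hr haR ha0 ξ u hu
    have hσnn : (0:ℝ) ≤ 1 - ‖a‖ ^ 2 / r ^ 2 := by
      rw [← sigma_sq hr haR]; positivity
    have hd0norm : ‖((1:ℂ) - (‖a‖:ℂ)^2/(r:ℂ)^2)⁻¹‖ = (1 - ‖a‖^2/r^2)⁻¹ := by
      rw [norm_inv]
      congr 1
      have hcast : ((1:ℂ) - (‖a‖:ℂ)^2/(r:ℂ)^2) = (((1 - ‖a‖^2/r^2 : ℝ)):ℂ) := by push_cast; ring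
      rw [hcast, Complex.norm_real, Real.norm_of_nonneg hσnn]
    have hηnorm2 : ‖η‖^2 = ((Real.sqrt (1 - ‖a‖ ^ 2 / r ^ 2))^2 * ‖ξ‖^2 +
        ‖(inner ℂ a ξ : ℂ)‖^2 / r^2) / (1 - ‖a‖^2/r^2)^2 := by
      have hdpos : 0 < 1 - ‖a‖^2/r^2 := by
        rw [← sigma_sq hr haR]
        exact pow_pos (sigma_pos hr haR) 2
      rw [hη, norm_smul, mul_pow, hunorm, hd0norm]
      have hdne : (1 - ‖a‖^2/r^2) ≠ 0 := hdpos.ne'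
      have hrne : (r:ℝ) ≠ 0 := hr.ne'
      field_simp
    have hsub : (0:ℝ) < r^2 - ‖a‖^2 := sub_pos.2 hlt
    have harg : ‖ξ‖ ^ 2 / (r ^ 2 - ‖a‖ ^ 2) + ‖(inner ℂ a ξ : ℂ)‖ ^ 2 / (r ^ 2 - ‖a‖ ^ 2) ^ 2
        = (‖η‖ / r) ^ 2 := by
      rw [div_pow, hηnorm2, sigma_sq hr haR]
      have h1 : r^2 - ‖a‖^2 ≠ 0 := hsub.ne'
      have h2 : (r:ℝ) ≠ 0 := hr.ne'
      field_simp
    rw [harg, Real.sqrt_sq (by positivity)]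
    -- the extremal disc
    have hR : (0:ℝ) < r / ‖η‖ := by positivity
    have hg : HasDerivAt (fun w : ℂ => w • η) η 0 := by
      simpa using (hasDerivAt_id (0:ℂ)).smul_const η
    have hgmaps : MapsTo (fun w : ℂ => w • η)
        (ball 0 (r / ‖η‖)) (ball (0 : EuclideanSpace ℂ (Fin n)) r) := by
      intro w hw
      rw [mem_ball_zero_iff] at hw ⊢
      rw [norm_smul]
      calc ‖w‖ * ‖η‖ < r / ‖η‖ * ‖η‖ := mul_lt_mul_of_pos_right hw hηn
        _ = r := div_mul_cancel₀ r hηn.ne'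
    have hφmaps : MapsTo (fun w : ℂ => mob r a (w • η)) (ball 0 (r / ‖η‖))
        (ball (0 : EuclideanSpace ℂ (Fin n)) r) := (mob_mapsTo hr haR ha0).comp hgmaps
    have hφdiff : DifferentiableOn ℂ (fun w : ℂ => mob r a (w • η)) (ball 0 (r / ‖η‖)) := by
      intro w hw
      have hgw : HasDerivAt (fun w : ℂ => w • η) η w := by
        simpa using (hasDerivAt_id w).smul_const η
      have hd := den_ne_zero hr haR (mem_ball_zero_iff.1 (hgmaps hw))
      exact (mob_hasDerivAt hgw hd).differentiableAt.differentiableWithinAt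
    have hφ0 : (fun w : ℂ => mob r a (w • η)) 0 = a := by
      simp only [zero_smul]
      exact mob_zero
    have hφd : HasDerivAt (fun w : ℂ => mob r a (w • η)) ξ 0 := by
      have H := mob_hasDerivAt_zero hr haR ha0 hg (by simp)
      rwa [hD0] at H
    apply le_antisymm
    · have := kobayashi_le hR hφdiff hφmaps hφ0 hφd
      rwa [one_div_div] at this
    · apply le_kobayashi
      · exact ⟨1 / (r / ‖η‖), r / ‖η‖, hR, rfl, _, hφdiff, hφmaps, hφ0, hφd⟩
      · intro R φ hR' h1 h2 h3 h4
        set G : ℂ → EuclideanSpace ℂ (Fin n) := fun w => mob r a (φ w) with hG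
        have hG0 : G 0 = 0 := by
          rw [hG]
          simp only [h3]
          exact mob_self hr haR ha0
        have hGd : HasDerivAt G η 0 := by
          have H := mob_hasDerivAt_center hr haR ha0 h4 h3
          exact H
        have hGdiff : DifferentiableOn ℂ G (ball 0 R) := by
          intro w hw
          have hφw : DifferentiableAt ℂ φ w :=
            (h1 w hw).differentiableAt (isOpen_ball.mem_nhds hw)
          have hd := den_ne_zero hr haR (mem_ball_zero_iff.1 (h2 hw))
          exact (mob_hasDerivAt hφw.hasDerivAt hd).differentiableAt.differentiableWithinAt
        have hGmaps : MapsTo G (ball 0 R) (ball (G 0) r) := by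
          rw [hG0]
          exact (mob_mapsTo hr haR ha0).comp h2
        have hSch := Complex.norm_deriv_le_div_of_mapsTo_ball hGdiff (hGmaps.mono_right ball_subset_closedBall) hR'
        rw [hGd.deriv] at hSch
        rw [div_le_div_iff₀ hr hR']
        have := (le_div_iff₀ hR').1 hSch
        linarith
end

section
/- If a complete Kähler manifold (M, ω) admits at every point P a quasi-coordinate chart ψ : B(r) ⊆ ℂⁿ → M with ψ(0) = P, ψ holomorphic and nonsingular, and C⁻¹ ω_{ℂⁿ} ≤ ψ*ω ≤ C ω_{ℂⁿ} on B(r), then the Kobayashi–Royden metric satisfies 𝔎_M(x, ξ) ≤ (√C / r) |ξ|_ω for all x ∈ M, ξ ∈ T'_x M. -/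
/-- If `(M, ω)` (here `M ⊆ ℂⁿ` with Hermitian metric of squared length `h x ξ = |ξ|²_ω`)
admits at every point `P` a quasi-coordinate chart `ψ : B(r) → M`, `ψ(0) = P`,
holomorphic and nonsingular, with `C⁻¹ ω_{ℂⁿ} ≤ ψ*ω ≤ C ω_{ℂⁿ}` on `B(r)`, then
`𝔎_M(x, ξ) ≤ (√C / r)|ξ|_ω` for all `x ∈ M`, `ξ`. -/
theorem kobayashi_upper_bound_of_quasi_coordinates {n : ℕ}
    (M : Set (EuclideanSpace ℂ (Fin n))) (hM : IsOpen M)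
    (h : EuclideanSpace ℂ (Fin n) → EuclideanSpace ℂ (Fin n) → ℝ)
    (r C : ℝ) (hr : 0 < r) (hC : 0 < C)
    (charts : ∀ P ∈ M, ∃ ψ : EuclideanSpace ℂ (Fin n) → EuclideanSpace ℂ (Fin n),
      DifferentiableOn ℂ ψ (Metric.ball 0 r) ∧
      Set.MapsTo ψ (Metric.ball 0 r) M ∧ ψ 0 = P ∧
      (∀ z ∈ Metric.ball (0 : EuclideanSpace ℂ (Fin n)) r,
        Function.Bijective (fderiv ℂ ψ z)) ∧
      (∀ z ∈ Metric.ball (0 : EuclideanSpace ℂ (Fin n)) r,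
        ∀ v : EuclideanSpace ℂ (Fin n),
          C⁻¹ * ‖v‖ ^ 2 ≤ h (ψ z) (fderiv ℂ ψ z v) ∧
          h (ψ z) (fderiv ℂ ψ z v) ≤ C * ‖v‖ ^ 2)) :
    ∀ x ∈ M, ∀ ξ : EuclideanSpace ℂ (Fin n),
      kobayashi M x ξ ≤ (Real.sqrt C / r) * Real.sqrt (h x ξ) := by
  intro x hx ξ
  obtain ⟨ψ, hdiff, hmaps, hψ0, hbij, hbound⟩ := charts x hx
  have h0r : (0 : EuclideanSpace ℂ (Fin n)) ∈ Metric.ball (0 : EuclideanSpace ℂ (Fin n)) r := by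
    simpa using hr
  obtain ⟨v, hv⟩ := (hbij 0 h0r).2 ξ
  have hbdd : BddBelow {t : ℝ | ∃ R : ℝ, 0 < R ∧ t = 1 / R ∧ ∃ φ : ℂ → EuclideanSpace ℂ (Fin n),
      DifferentiableOn ℂ φ (Metric.ball 0 R) ∧ Set.MapsTo φ (Metric.ball 0 R) M ∧
      φ 0 = x ∧ HasDerivAt φ ξ 0} := by
    refine ⟨0, ?_⟩
    rintro t ⟨R, hR, rfl, -⟩
    positivity
  have hhx : C⁻¹ * ‖v‖ ^ 2 ≤ h x ξ := by
    have := (hbound 0 h0r v).1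
    rwa [hψ0, hv] at this
  have hrhs0 : 0 ≤ (Real.sqrt C / r) * Real.sqrt (h x ξ) := by positivity
  have hDψ : DifferentiableAt ℂ ψ 0 := hdiff.differentiableAt (Metric.isOpen_ball.mem_nhds h0r)
  by_cases hv0 : v = 0
  · have hξ0 : ξ = 0 := by rw [← hv, hv0, map_zero]
    refine le_trans ?_ hrhs0
    refine le_of_forall_pos_le_add fun ε hε => ?_
    rw [zero_add]
    have : ε ∈ {t : ℝ | ∃ R : ℝ, 0 < R ∧ t = 1 / R ∧ ∃ φ : ℂ → EuclideanSpace ℂ (Fin n),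
        DifferentiableOn ℂ φ (Metric.ball 0 R) ∧ Set.MapsTo φ (Metric.ball 0 R) M ∧
        φ 0 = x ∧ HasDerivAt φ ξ 0} := by
      refine ⟨1/ε, by positivity, by field_simp, fun _ => x, differentiableOn_const x,
        fun z _ => hx, rfl, ?_⟩
      rw [hξ0]; exact hasDerivAt_const 0 x
    exact csInf_le hbdd this
  · have hvn : 0 < ‖v‖ := norm_pos_iff.mpr hv0
    set R := r / ‖v‖ with hRdef
    have hR : 0 < R := by positivity
    have hmem : ‖v‖ / r ∈ {t : ℝ | ∃ R : ℝ, 0 < R ∧ t = 1 / R ∧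
        ∃ φ : ℂ → EuclideanSpace ℂ (Fin n),
        DifferentiableOn ℂ φ (Metric.ball 0 R) ∧ Set.MapsTo φ (Metric.ball 0 R) M ∧
        φ 0 = x ∧ HasDerivAt φ ξ 0} := by
      refine ⟨R, hR, by rw [hRdef, one_div_div], fun w => ψ (w • v), ?_, ?_, ?_, ?_⟩
      · have hlin : DifferentiableOn ℂ (fun w : ℂ => w • v) (Metric.ball 0 R) :=
          (differentiable_id.smul_const v).differentiableOn
        refine hdiff.comp hlin ?_
        intro w hw
        simp only [Metric.mem_ball, dist_zero_right] at hw ⊢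
        calc ‖w • v‖ = ‖w‖ * ‖v‖ := norm_smul w v
          _ < R * ‖v‖ := by exact mul_lt_mul_of_pos_right hw hvn
          _ = r := by rw [hRdef, div_mul_cancel₀ r hvn.ne']
      · intro w hw
        apply hmaps
        simp only [Metric.mem_ball, dist_zero_right] at hw ⊢
        calc ‖w • v‖ = ‖w‖ * ‖v‖ := norm_smul w v
          _ < R * ‖v‖ := by exact mul_lt_mul_of_pos_right hw hvn
          _ = r := by rw [hRdef, div_mul_cancel₀ r hvn.ne']
      · simp [hψ0]
      · have hg : HasDerivAt (fun w : ℂ => w • v) v 0 := by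
          simpa using (hasDerivAt_id (0:ℂ)).smul_const v
        have hf : HasFDerivAt ψ (fderiv ℂ ψ 0) ((fun w : ℂ => w • v) 0) := by
          simpa using hDψ.hasFDerivAt
        have := hf.comp_hasDerivAt 0 hg
        rw [hv] at this; exact this
    have h1 : kobayashi M x ξ ≤ ‖v‖ / r := csInf_le hbdd hmem
    refine h1.trans ?_
    rw [div_mul_eq_mul_div, div_le_div_iff_of_pos_right hr, ← Real.sqrt_mul hC.le]
    rw [Real.le_sqrt (norm_nonneg v)]
    calc ‖v‖ ^ 2 = C * (C⁻¹ * ‖v‖ ^ 2) := by field_simp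
      _ ≤ C * h x ξ := mul_le_mul_of_nonneg_left hhx hC.le
    exact mul_nonneg hC.le (le_trans (by positivity) hhx)
end
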